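/- arXiv:2212.06975 — 3 statements merged into one kernel-verified Lean document; each statement's English description precedes it below -/
import Mathlib

section
/- For density operators ρ, σ, Q(ρ,σ) ≥ F(ρ,σ)², where F(ρ,σ) := ‖√ρ √σ‖₁ is the fidelity; hence if F(ρ,σ)² > t for a real t, then Q(ρ,σ) > t. -/
noncomputable section
open Matrix Filter
open scoped ComplexOrder Kronecker

variable {m : Type*} [Fintype m] [DecidableEq m]

/-- `A^s` via the continuous functional calculus (with `0^s = 0` for `s ∈ (0,1)`). -/
def mpow (A : Matrix m m ℂ) (s : ℝ) : Matrix m m ℂ := cfc (fun x : ℝ => x ^ s) A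

/-- Non-logarithmic quantum Chernoff divergence `Q(ρ,σ) = inf_{0<s<1} Tr(ρ^s σ^{1-s})`. -/
def NQCD (ρ σ : Matrix m m ℂ) : ℝ :=
  ⨅ s : Set.Ioo (0:ℝ) 1, ((mpow ρ s) * (mpow σ (1 - (s : ℝ)))).trace.re

/-- Trace distance `d(ρ,σ) = (1/2) Tr |ρ - σ|`. -/
def traceDist (ρ σ : Matrix m m ℂ) : ℝ :=
  (1/2) * (cfc (fun x : ℝ => |x|) (ρ - σ)).trace.re

/-- Matrix square root via functional calculus. -/
def msqrt (A : Matrix m m ℂ) : Matrix m m ℂ := cfc Real.sqrt A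

/-- Uhlmann fidelity `F(ρ,σ) = Tr √(√ρ σ √ρ)`. -/
def fidelity (ρ σ : Matrix m m ℂ) : ℝ := (msqrt (msqrt ρ * σ * msqrt ρ)).trace.re

/-- A density operator: positive semidefinite with unit trace. -/
def IsDensity (ρ : Matrix m m ℂ) : Prop := ρ.PosSemidef ∧ ρ.trace = 1

/-- `k`-fold tensor power of a matrix. -/
def tpow {n : ℕ} (ρ : Matrix (Fin n) (Fin n) ℂ) (k : ℕ) :
    Matrix (Fin k → Fin n) (Fin k → Fin n) ℂ := fun i j => ∏ t, ρ (i t) (j t)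

/-- Von Neumann entropy `H(A) = -Tr(A log A)` (natural logarithm). -/
def vnEntropy (A : Matrix m m ℂ) : ℝ := (cfc Real.negMulLog A).trace.re

/-- Partial trace over the first (classical) factor. -/
def ptraceFst {C E : Type*} [Fintype C] [Fintype E]
    (ρ : Matrix (C × E) (C × E) ℂ) : Matrix E E ℂ :=
  fun a b => ∑ c : C, ρ (c, a) (c, b)

/-- Conditional von Neumann entropy `H(C|E) = H(CE) - H(E)`. -/
def condEnt {C E : Type*} [Fintype C] [DecidableEq C] [Fintype E] [DecidableEq E]
    (ρ : Matrix (C × E) (C × E) ℂ) : ℝ :=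
  vnEntropy ρ - vnEntropy (ptraceFst ρ)

/-- The classical-quantum state `(1/2)|0⟩⟨0| ⊗ ρ0 + (1/2)|1⟩⟨1| ⊗ ρ1`. -/
def cqState {E : Type*} [Fintype E] [DecidableEq E] (ρ0 ρ1 : Matrix E E ℂ) :
    Matrix ((Fin 2) × E) ((Fin 2) × E) ℂ :=
  fun p q => if p.1 = q.1 then (1/2 : ℂ) * (if p.1 = 0 then ρ0 p.2 q.2 else ρ1 p.2 q.2) else 0

/-- Tensor product `ρ_{m₁} ⊗ ⋯ ⊗ ρ_{m_k}` selected by a bit string `m`. -/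
def tensSel {n : ℕ} (ρs : Fin 2 → Matrix (Fin n) (Fin n) ℂ) {k : ℕ} (m : Fin k → Fin 2) :
    Matrix (Fin k → Fin n) (Fin k → Fin n) ℂ := fun i j => ∏ t, (ρs (m t)) (i t) (j t)

/-!
Put `X = √ρ √σ`, so that `F(ρ,σ) = Tr √(X X†)`. Polar decomposition gives a partial isometry `L`
with `F = Tr (L X)`. Splitting `√ρ = ρ^((1-s)/2) ρ^(s/2)` and `√σ = σ^((1-s)/2) σ^(s/2)`, the
Cauchy–Schwarz inequality for the Hilbert–Schmidt inner product gives
`F² ≤ Tr (L ρ^(1-s) L† σ^s) · Tr (ρ^s σ^(1-s))`. Writing `ρ = U diag(p) U†`, `σ = V diag(q) V†`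
and `C = V† L U`, the first factor is `∑ |C_ij|² p_j^(1-s) q_i^s`, which the weighted AM–GM
inequality bounds by
`(1-s) Tr (L ρ L†) + s Tr (L† σ L) ≤ (1-s) Tr ρ + s Tr σ = 1`, as `L†L` and `LL†` are projections.
-/

namespace Matrix

section

variable {ι κ : Type*} [Fintype ι] [Fintype κ]

lemma norm_trace_mul_sq_le (A : Matrix ι κ ℂ) (B : Matrix κ ι ℂ) :
    ‖(A * B).trace‖ ^ 2 ≤ (A * Aᴴ).trace.re * (Bᴴ * B).trace.re := by
  set x : EuclideanSpace ℂ _ := WithLp.toLp 2 (vec Aᴴ)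
  set y : EuclideanSpace ℂ _ := WithLp.toLp 2 (vec B)
  have hxy : inner ℂ x y = (A * B).trace := by
    rw [EuclideanSpace.inner_toLp_toLp, dotProduct_comm, star_vec_dotProduct_vec,
      conjTranspose_conjTranspose]
  have hxx : ‖x‖ ^ 2 = (A * Aᴴ).trace.re := by
    rw [← inner_self_eq_norm_sq (𝕜 := ℂ), EuclideanSpace.inner_toLp_toLp, dotProduct_comm,
      star_vec_dotProduct_vec, conjTranspose_conjTranspose]
    rfl
  have hyy : ‖y‖ ^ 2 = (Bᴴ * B).trace.re := by
    rw [← inner_self_eq_norm_sq (𝕜 := ℂ), EuclideanSpace.inner_toLp_toLp, dotProduct_comm,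
      star_vec_dotProduct_vec]
    rfl
  rw [← hxy, ← hxx, ← hyy, ← mul_pow]
  exact pow_le_pow_left₀ (norm_nonneg _) (norm_inner_le_norm x y) 2

lemma isStarProjection_mul_conjTranspose_self {L : Matrix ι κ ℂ}
    (hL : IsStarProjection (Lᴴ * L)) : IsStarProjection (L * Lᴴ) := by
  have hP : (Lᴴ * L)ᴴ = Lᴴ * L := hL.isSelfAdjoint
  have hPP : Lᴴ * L * (Lᴴ * L) = Lᴴ * L := hL.isIdempotentElem
  have hLP : L * (Lᴴ * L) = L := by
    have : (L - L * (Lᴴ * L))ᴴ * (L - L * (Lᴴ * L)) = 0 := by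
      rw [conjTranspose_sub, conjTranspose_mul, hP]
      simp only [Matrix.sub_mul, Matrix.mul_sub, ← Matrix.mul_assoc]
      simp only [Matrix.mul_assoc] at hPP ⊢
      simp only [hPP, sub_self]
    exact (sub_eq_zero.mp (conjTranspose_mul_self_eq_zero.mp this)).symm
  refine ⟨?_, isHermitian_mul_conjTranspose_self L⟩
  rw [IsIdempotentElem, Matrix.mul_assoc, ← Matrix.mul_assoc Lᴴ, ← Matrix.mul_assoc, hLP]

lemma re_trace_mul_mul_conjTranspose_le [DecidableEq κ] {A : Matrix κ κ ℂ} (hA : A.PosSemidef)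
    {L : Matrix ι κ ℂ} (hL : IsStarProjection (Lᴴ * L)) :
    (L * A * Lᴴ).trace.re ≤ A.trace.re := by
  set Q := 1 - Lᴴ * L
  have hQ : IsStarProjection Q := hL.one_sub
  have hQA : A.trace - (L * A * Lᴴ).trace = (Qᴴ * A * Q).trace := by
    rw [trace_mul_cycle L, trace_mul_cycle Qᴴ, show Qᴴ = Q from hQ.isSelfAdjoint,
      hQ.isIdempotentElem.eq, Matrix.sub_mul, Matrix.one_mul, trace_sub]
  have := (Complex.nonneg_iff.mp (hA.conjTranspose_mul_mul_same Q).trace_nonneg).1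
  rw [← hQA, Complex.sub_re] at this
  linarith

end

section

variable {ι : Type*} [Fintype ι] [DecidableEq ι]

lemma cfc_mul_cfc (A : Matrix ι ι ℂ) (f g : ℝ → ℝ) :
    cfc f A * cfc g A = cfc (fun x => f x * g x) A :=
  (cfc_mul f g A (A.finite_real_spectrum.continuousOn f)
    (A.finite_real_spectrum.continuousOn g)).symm

lemma isStarProjection_cfc (A : Matrix ι ι ℂ) {f : ℝ → ℝ} (hf : ∀ x, f x * f x = f x) :
    IsStarProjection (cfc f A) where
  isIdempotentElem := by rw [IsIdempotentElem, cfc_mul_cfc]; simp only [hf]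
  isSelfAdjoint := cfc_predicate f A

lemma PosSemidef.nonneg_of_mem_spectrum {A : Matrix ι ι ℂ} (hA : A.PosSemidef) {x : ℝ}
    (hx : x ∈ spectrum ℝ A) : 0 ≤ x := by
  obtain ⟨i, rfl⟩ := hA.1.spectrum_real_eq_range_eigenvalues ▸ hx
  exact hA.eigenvalues_nonneg i

end

section

variable {ι κ : Type*} [Fintype ι] [Fintype κ] [DecidableEq ι] [DecidableEq κ]

lemma re_trace_mul_diagonal_mul_conjTranspose_mul_diagonal (C : Matrix κ ι ℂ) (a : ι → ℝ)
    (b : κ → ℝ) :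
    (C * diagonal (fun j => (a j : ℂ)) * Cᴴ * diagonal (fun i => (b i : ℂ))).trace.re =
      ∑ i, ∑ j, b i * a j * ‖C i j‖ ^ 2 := by
  have hdiag (i : κ) :
      (C * diagonal (fun j => (a j : ℂ)) * Cᴴ) i i = ∑ j, ((a j * ‖C i j‖ ^ 2 : ℝ) : ℂ) := by
    rw [mul_apply]
    refine Finset.sum_congr rfl fun j _ => ?_
    rw [mul_diagonal, conjTranspose_apply, Complex.star_def, mul_right_comm, Complex.mul_conj']
    push_cast
    ring
  simp only [trace, diag_apply, mul_diagonal, hdiag, Finset.sum_mul, Complex.re_sum,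
    ← Complex.ofReal_mul, Complex.ofReal_re]
  exact Finset.sum_congr rfl fun i _ => Finset.sum_congr rfl fun j _ => by ring

lemma re_trace_mul_cfc_mul_conjTranspose_mul_cfc {A : Matrix ι ι ℂ} {B : Matrix κ κ ℂ}
    (hA : A.IsHermitian) (hB : B.IsHermitian) (L : Matrix κ ι ℂ) (f g : ℝ → ℝ) :
    (L * cfc f A * Lᴴ * cfc g B).trace.re =
      ∑ i, ∑ j, g (hB.eigenvalues i) * f (hA.eigenvalues j) *
        ‖(star (hB.eigenvectorUnitary : Matrix κ κ ℂ) * L *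
          (hA.eigenvectorUnitary : Matrix ι ι ℂ)) i j‖ ^ 2 := by
  set U : Matrix ι ι ℂ := ↑hA.eigenvectorUnitary
  set V : Matrix κ κ ℂ := ↑hB.eigenvectorUnitary
  rw [← re_trace_mul_diagonal_mul_conjTranspose_mul_diagonal]
  congr 1
  rw [hA.cfc_eq, hB.cfc_eq, IsHermitian.cfc, IsHermitian.cfc]
  simp only [Unitary.conjStarAlgAut_apply]
  change (L * (U * _ * star U) * Lᴴ * (V * _ * star V)).trace = _
  rw [← Matrix.mul_assoc _ (V * _), trace_mul_comm]
  simp only [conjTranspose_mul, star_eq_conjTranspose, conjTranspose_conjTranspose,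
    Matrix.mul_assoc]
  rfl

end

end Matrix

section

variable {ι κ : Type*} [Fintype ι] [Fintype κ] [DecidableEq ι]

lemma conjTranspose_mpow (A : Matrix ι ι ℂ) (a : ℝ) : (mpow A a)ᴴ = mpow A a :=
  IsSelfAdjoint.cfc

lemma conjTranspose_msqrt (A : Matrix ι ι ℂ) : (msqrt A)ᴴ = msqrt A :=
  IsSelfAdjoint.cfc

lemma mpow_mul_mpow {A : Matrix ι ι ℂ} (hA : A.PosSemidef) {a b : ℝ} (hab : a + b ≠ 0) :
    mpow A a * mpow A b = mpow A (a + b) := by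
  rw [mpow, mpow, Matrix.cfc_mul_cfc, mpow]
  exact cfc_congr fun x hx => (Real.rpow_add' (hA.nonneg_of_mem_spectrum hx) hab).symm

lemma mpow_half_mul_mpow_half {A : Matrix ι ι ℂ} (hA : A.PosSemidef) {a : ℝ} (ha : a ≠ 0) :
    mpow A (a / 2) * mpow A (a / 2) = mpow A a := by
  rw [mpow_mul_mpow hA (by rwa [add_halves]), add_halves]

lemma msqrt_eq_mpow (A : Matrix ι ι ℂ) : msqrt A = mpow A (1 / 2) := by
  rw [msqrt, mpow, ← funext Real.sqrt_eq_rpow]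

lemma msqrt_mul_msqrt {A : Matrix ι ι ℂ} (hA : A.PosSemidef) : msqrt A * msqrt A = A := by
  rw [msqrt_eq_mpow, mpow_half_mul_mpow_half hA one_ne_zero, mpow]
  simp only [Real.rpow_one]
  exact cfc_id' ℝ A hA.1.isSelfAdjoint

lemma exists_isStarProjection_trace_mul_eq_trace_msqrt (X : Matrix ι κ ℂ) :
    ∃ L : Matrix κ ι ℂ, IsStarProjection (Lᴴ * L) ∧ (L * X).trace = (msqrt (X * Xᴴ)).trace := by
  set M := X * Xᴴ
  -- Since `0⁻¹ = 0`, `T` is the Moore–Penrose inverse of `√M`, and `Xᴴ * T` is the partial isometry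
  -- in the polar decomposition of `Xᴴ`.
  set T := cfc (fun x : ℝ => (√x)⁻¹) M
  have hT : Tᴴ = T := IsSelfAdjoint.cfc
  have hMT : M * T = msqrt M := by
    calc M * T = cfc (fun x : ℝ => x) M * T := by
          rw [cfc_id' ℝ M (isHermitian_mul_conjTranspose_self X).isSelfAdjoint]
      _ = msqrt M := by
          rw [Matrix.cfc_mul_cfc, msqrt]
          simp only [← div_eq_mul_inv, Real.div_sqrt]
  refine ⟨Xᴴ * T, ?_, ?_⟩
  · rw [conjTranspose_mul, conjTranspose_conjTranspose, hT, Matrix.mul_assoc,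
      ← Matrix.mul_assoc X, hMT, msqrt, Matrix.cfc_mul_cfc]
    refine Matrix.isStarProjection_cfc M fun x => ?_
    rcases eq_or_ne (√x) 0 with h | h <;> simp [h]
  · rw [trace_mul_cycle, hMT]

variable [DecidableEq κ]

lemma re_trace_mul_mpow_mul_conjTranspose_mul_mpow_le {A : Matrix ι ι ℂ} {B : Matrix κ κ ℂ}
    (hA : A.PosSemidef) (hB : B.PosSemidef) (L : Matrix κ ι ℂ) {s : ℝ} (hs0 : 0 ≤ s)
    (hs1 : s ≤ 1) :
    (L * mpow A (1 - s) * Lᴴ * mpow B s).trace.re ≤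
      (1 - s) * (L * A * Lᴴ).trace.re + s * (Lᴴ * B * L).trace.re := by
  have hLA : L * A * Lᴴ = L * cfc (id : ℝ → ℝ) A * Lᴴ * cfc (fun _ : ℝ => (1 : ℝ)) B := by
    rw [cfc_id ℝ A hA.1.isSelfAdjoint, cfc_const_one ℝ B hB.1.isSelfAdjoint, Matrix.mul_one]
  have hLB : (Lᴴ * B * L).trace =
      (L * cfc (fun _ : ℝ => (1 : ℝ)) A * Lᴴ * cfc (id : ℝ → ℝ) B).trace := by
    rw [cfc_id ℝ B hB.1.isSelfAdjoint, cfc_const_one ℝ A hA.1.isSelfAdjoint, Matrix.mul_one,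
      trace_mul_cycle]
  rw [hLA, hLB, mpow, mpow, Matrix.re_trace_mul_cfc_mul_conjTranspose_mul_cfc hA.1 hB.1,
    Matrix.re_trace_mul_cfc_mul_conjTranspose_mul_cfc hA.1 hB.1,
    Matrix.re_trace_mul_cfc_mul_conjTranspose_mul_cfc hA.1 hB.1, Finset.mul_sum, Finset.mul_sum,
    ← Finset.sum_add_distrib]
  refine Finset.sum_le_sum fun i _ => ?_
  rw [Finset.mul_sum, Finset.mul_sum, ← Finset.sum_add_distrib]
  refine Finset.sum_le_sum fun j _ => ?_
  have hamgm := Real.geom_mean_le_arith_mean2_weighted (sub_nonneg.2 hs1) hs0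
    (hA.eigenvalues_nonneg j) (hB.eigenvalues_nonneg i) (by ring)
  have hc := sq_nonneg ‖(star (hB.1.eigenvectorUnitary : Matrix κ κ ℂ) * L *
    (hA.1.eigenvectorUnitary : Matrix ι ι ℂ)) i j‖
  simp only [id, one_mul, mul_one]
  nlinarith

lemma trace_mpow_mul_mpow_eq_trace_conjTranspose_mul_self {ρ σ : Matrix ι ι ℂ}
    (hρ : ρ.PosSemidef) (hσ : σ.PosSemidef) {a b : ℝ} (ha : a ≠ 0) (hb : b ≠ 0) :
    (mpow ρ a * mpow σ b).trace =
      ((mpow ρ (a / 2) * mpow σ (b / 2))ᴴ * (mpow ρ (a / 2) * mpow σ (b / 2))).trace := by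
  rw [← mpow_half_mul_mpow_half hρ ha, ← mpow_half_mul_mpow_half hσ hb]
  simp only [conjTranspose_mul, conjTranspose_mpow, Matrix.mul_assoc]
  conv_rhs => rw [trace_mul_comm]
  simp only [Matrix.mul_assoc]

lemma re_trace_mpow_mul_mpow_nonneg {ρ σ : Matrix ι ι ℂ} (hρ : ρ.PosSemidef)
    (hσ : σ.PosSemidef) {a b : ℝ} (ha : a ≠ 0) (hb : b ≠ 0) :
    0 ≤ (mpow ρ a * mpow σ b).trace.re := by
  rw [trace_mpow_mul_mpow_eq_trace_conjTranspose_mul_self hρ hσ ha hb]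
  exact (Complex.nonneg_iff.mp (posSemidef_conjTranspose_mul_self _).trace_nonneg).1

lemma norm_trace_mul_msqrt_mul_msqrt_sq_le {ρ σ : Matrix ι ι ℂ} (hρ : ρ.PosSemidef)
    (hσ : σ.PosSemidef) (L : Matrix ι ι ℂ) {s : ℝ} (hs0 : 0 < s) (hs1 : s < 1) :
    ‖(L * (msqrt ρ * msqrt σ)).trace‖ ^ 2 ≤
      (L * mpow ρ (1 - s) * Lᴴ * mpow σ s).trace.re * (mpow ρ s * mpow σ (1 - s)).trace.re := by
  have hs1' : 1 - s ≠ 0 := by linarith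
  set Y := mpow σ (s / 2) * L * mpow ρ ((1 - s) / 2)
  set Z := mpow ρ (s / 2) * mpow σ ((1 - s) / 2)
  have hsplit {A : Matrix ι ι ℂ} (hA : A.PosSemidef) :
      msqrt A = mpow A ((1 - s) / 2) * mpow A (s / 2) := by
    rw [mpow_mul_mpow hA (by linarith), msqrt_eq_mpow]
    ring_nf
  have hLX : (L * (msqrt ρ * msqrt σ)).trace = (Y * Z).trace := by
    rw [hsplit hρ, hsplit hσ, show ∀ a b c d : Matrix ι ι ℂ,
      L * (a * b * (c * d)) = (L * a * b * c) * d by intros; simp only [Matrix.mul_assoc],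
      trace_mul_comm]
    simp only [Y, Z, Matrix.mul_assoc]
  have hYY : (Y * Yᴴ).trace = (L * mpow ρ (1 - s) * Lᴴ * mpow σ s).trace := by
    rw [← mpow_half_mul_mpow_half hρ hs1', ← mpow_half_mul_mpow_half hσ hs0.ne']
    simp only [Y, conjTranspose_mul, conjTranspose_mpow, Matrix.mul_assoc]
    rw [trace_mul_comm]
    simp only [Matrix.mul_assoc]
  rw [hLX, ← hYY, trace_mpow_mul_mpow_eq_trace_conjTranspose_mul_self hρ hσ hs0.ne' hs1']
  exact Matrix.norm_trace_mul_sq_le Y Z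

theorem fidelity_sq_le_re_trace_mpow_mul_mpow {ρ σ : Matrix ι ι ℂ} (hρ : ρ.PosSemidef)
    (hσ : σ.PosSemidef) {s : ℝ} (hs0 : 0 < s) (hs1 : s < 1) :
    fidelity ρ σ ^ 2 ≤
      (mpow ρ s * mpow σ (1 - s)).trace.re * ((1 - s) * ρ.trace.re + s * σ.trace.re) := by
  set X := msqrt ρ * msqrt σ
  have hXX : X * Xᴴ = msqrt ρ * σ * msqrt ρ := by
    rw [conjTranspose_mul, conjTranspose_msqrt, conjTranspose_msqrt, Matrix.mul_assoc,
      ← Matrix.mul_assoc (msqrt σ), msqrt_mul_msqrt hσ, ← Matrix.mul_assoc]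
  obtain ⟨L, hL, hLX⟩ := exists_isStarProjection_trace_mul_eq_trace_msqrt X
  have hF : fidelity ρ σ = (L * X).trace.re := by rw [hLX, hXX]; rfl
  have hρL := Matrix.re_trace_mul_mul_conjTranspose_le hρ hL
  have hσL := Matrix.re_trace_mul_mul_conjTranspose_le hσ (L := Lᴴ)
    (by simpa using Matrix.isStarProjection_mul_conjTranspose_self hL)
  rw [conjTranspose_conjTranspose] at hσL
  have hnonneg := re_trace_mpow_mul_mpow_nonneg hρ hσ hs0.ne' (by linarith : 1 - s ≠ 0)
  calc fidelity ρ σ ^ 2 ≤ ‖(L * X).trace‖ ^ 2 :=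
        hF ▸ sq_le_sq.mpr ((Complex.abs_re_le_norm _).trans_eq (abs_norm _).symm)
    _ ≤ (L * mpow ρ (1 - s) * Lᴴ * mpow σ s).trace.re * (mpow ρ s * mpow σ (1 - s)).trace.re :=
        norm_trace_mul_msqrt_mul_msqrt_sq_le hρ hσ L hs0 hs1
    _ ≤ ((1 - s) * (L * ρ * Lᴴ).trace.re + s * (Lᴴ * σ * L).trace.re) *
          (mpow ρ s * mpow σ (1 - s)).trace.re := by
        gcongr
        exact re_trace_mul_mpow_mul_conjTranspose_mul_mpow_le hρ hσ L hs0.le hs1.le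
    _ ≤ ((1 - s) * ρ.trace.re + s * σ.trace.re) * (mpow ρ s * mpow σ (1 - s)).trace.re := by
        gcongr
    _ = _ := mul_comm _ _

end

theorem nqcd_ge_fidelity_sq (ρ σ : Matrix m m ℂ) (hρ : IsDensity ρ) (hσ : IsDensity σ) :
    (fidelity ρ σ) ^ 2 ≤ NQCD ρ σ ∧ ∀ t : ℝ, t < (fidelity ρ σ) ^ 2 → t < NQCD ρ σ := by
  have hterm (s : Set.Ioo (0 : ℝ) 1) :
      fidelity ρ σ ^ 2 ≤ (mpow ρ s * mpow σ (1 - (s : ℝ))).trace.re := by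
    simpa [hρ.2, hσ.2] using fidelity_sq_le_re_trace_mpow_mul_mpow hρ.1 hσ.1 s.2.1 s.2.2
  have : Nonempty (Set.Ioo (0 : ℝ) 1) := (Set.nonempty_Ioo.mpr one_pos).to_subtype
  have hQ : fidelity ρ σ ^ 2 ≤ NQCD ρ σ := le_ciInf hterm
  exact ⟨hQ, fun t ht => ht.trans_le hQ⟩
end
end

section
/- For density operators ρ, σ, Q(ρ,σ) ≤ F(ρ,σ), where F is the fidelity; hence if F(ρ,σ) ≤ t then Q(ρ,σ) ≤ t. -/
noncomputable section
open Matrix Filter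
open scoped ComplexOrder Kronecker

variable {m : Type*} [Fintype m] [DecidableEq m]

/-!
Evaluating the infimum at `s = 1/2` gives `Q(ρ,σ) ≤ Re Tr(√σ √ρ)`. For `B = √σ √ρ` one has
`B⋆B = √ρ σ √ρ`, so `F(ρ,σ) = Tr |B|`, and `Re Tr B ≤ Tr |B|` holds for every matrix `B`: in an
eigenbasis of `B⋆B` the diagonal entries of `B` satisfy `|B_ii|² ≤ (B⋆B)_ii`.
-/

open scoped MatrixOrder

namespace Matrix

variable {n : Type*} [Fintype n]

lemma re_diag_le_sqrt_diag_conjTranspose_mul_self (M : Matrix n n ℂ) (i : n) :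
    (M i i).re ≤ √((Mᴴ * M) i i).re := by
  have hcol : ((Mᴴ * M) i i).re = ∑ j, Complex.normSq (M j i) := by
    simp [mul_apply, Complex.normSq_apply]
  calc (M i i).re ≤ √(Complex.normSq (M i i)) := Complex.re_le_norm _
    _ ≤ √((Mᴴ * M) i i).re := by
        rw [hcol]
        gcongr
        exact Finset.single_le_sum (f := fun j => Complex.normSq (M j i))
          (fun j _ => Complex.normSq_nonneg _) (Finset.mem_univ i)

variable [DecidableEq n]

lemma PosSemidef.mpow_eq_rpow {A : Matrix n n ℂ} (hA : A.PosSemidef) (s : ℝ) :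
    mpow A s = A ^ s :=
  (CFC.rpow_eq_cfc_real hA.nonneg).symm

lemma PosSemidef.msqrt_eq_sqrt {A : Matrix n n ℂ} (hA : A.PosSemidef) :
    msqrt A = CFC.sqrt A := by
  rw [CFC.sqrt_eq_real_sqrt A hA.nonneg, cfcₙ_eq_cfc]
  rfl

lemma re_trace_mul_nonneg {A B : Matrix n n ℂ} (hA : 0 ≤ A) (hB : 0 ≤ B) :
    0 ≤ (A * B).trace.re := by
  have hconj : 0 ≤ CFC.sqrt A * B * CFC.sqrt A :=
    IsSelfAdjoint.conjugate_nonneg hB (CFC.sqrt_nonneg A).isSelfAdjoint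
  calc 0 ≤ (CFC.sqrt A * B * CFC.sqrt A).trace.re :=
        (Complex.nonneg_iff.mp hconj.posSemidef.trace_nonneg).1
    _ = (A * B).trace.re := by
        rw [trace_mul_cycle, CFC.sqrt_mul_sqrt_self A hA]

lemma IsHermitian.trace_cfc {A : Matrix n n ℂ} (hA : A.IsHermitian) (f : ℝ → ℝ) :
    (cfc f A).trace = ∑ i, (f (hA.eigenvalues i) : ℂ) := by
  rw [hA.cfc_eq, IsHermitian.cfc, Unitary.conjStarAlgAut_apply, trace_mul_cycle,
    (mem_unitaryGroup_iff').mp hA.eigenvectorUnitary.2, Matrix.one_mul, trace_diagonal]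
  simp

lemma re_trace_le_re_trace_abs (B : Matrix n n ℂ) : B.trace.re ≤ (CFC.abs B).trace.re := by
  have hA : (Bᴴ * B).IsHermitian := isHermitian_conjTranspose_mul_self B
  set U : Matrix n n ℂ := ↑hA.eigenvectorUnitary
  set M := star U * B * U
  have hUU : U * star U = 1 := mem_unitaryGroup_iff.mp hA.eigenvectorUnitary.2
  have hdiag := hA.conjStarAlgAut_star_eigenvectorUnitary
  rw [Unitary.conjStarAlgAut_apply, Unitary.coe_star, star_star] at hdiag
  have hMM : Mᴴ * M = star U * (Bᴴ * B) * U := by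
    simp only [M, ← star_eq_conjTranspose, star_mul, star_star, Matrix.mul_assoc]
    rw [← Matrix.mul_assoc U (star U), hUU, Matrix.one_mul]
  have htrace : B.trace = M.trace := by rw [trace_mul_cycle, hUU, Matrix.one_mul]
  have habs : (CFC.abs B).trace = ∑ i, (√(hA.eigenvalues i) : ℂ) := by
    rw [CFC.abs, CFC.sqrt_eq_real_sqrt _ (star_mul_self_nonneg B), cfcₙ_eq_cfc,
      star_eq_conjTranspose, hA.trace_cfc]
  rw [htrace, habs, trace, Complex.re_sum, Complex.re_sum]
  refine Finset.sum_le_sum fun i _ => ?_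
  simpa [hMM, U, hdiag] using re_diag_le_sqrt_diag_conjTranspose_mul_self M i

end Matrix

lemma NQCD_le_re_trace_rpow {ρ σ : Matrix m m ℂ} (hρ : ρ.PosSemidef) (hσ : σ.PosSemidef)
    (s : Set.Ioo (0 : ℝ) 1) : NQCD ρ σ ≤ (ρ ^ (s : ℝ) * σ ^ (1 - s : ℝ)).trace.re := by
  simp only [NQCD, hρ.mpow_eq_rpow, hσ.mpow_eq_rpow]
  refine ciInf_le ⟨0, Set.forall_mem_range.2 fun t => ?_⟩ s
  exact re_trace_mul_nonneg CFC.rpow_nonneg CFC.rpow_nonneg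

lemma fidelity_eq_re_trace_abs {ρ σ : Matrix m m ℂ} (hρ : ρ.PosSemidef) (hσ : σ.PosSemidef) :
    fidelity ρ σ = (CFC.abs (CFC.sqrt σ * CFC.sqrt ρ)).trace.re := by
  set B := CFC.sqrt σ * CFC.sqrt ρ
  have hconj : msqrt ρ * σ * msqrt ρ = star B * B := by
    rw [star_mul, (CFC.sqrt_nonneg σ).isSelfAdjoint.star_eq,
      (CFC.sqrt_nonneg ρ).isSelfAdjoint.star_eq, hρ.msqrt_eq_sqrt,
      Matrix.mul_assoc (CFC.sqrt ρ) (CFC.sqrt σ), ← Matrix.mul_assoc (CFC.sqrt σ),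
      CFC.sqrt_mul_sqrt_self σ hσ.nonneg, Matrix.mul_assoc]
  have hB : (star B * B).PosSemidef := (star_mul_self_nonneg B).posSemidef
  rw [fidelity, hconj, hB.msqrt_eq_sqrt]
  rfl

theorem nqcd_le_fidelity (ρ σ : Matrix m m ℂ) (hρ : IsDensity ρ) (hσ : IsDensity σ) :
    NQCD ρ σ ≤ fidelity ρ σ ∧ ∀ t : ℝ, fidelity ρ σ ≤ t → NQCD ρ σ ≤ t := by
  have hmain : NQCD ρ σ ≤ fidelity ρ σ := calc
    NQCD ρ σ ≤ (ρ ^ (1 / 2 : ℝ) * σ ^ (1 - 1 / 2 : ℝ)).trace.re :=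
        NQCD_le_re_trace_rpow hρ.1 hσ.1 ⟨1 / 2, by norm_num, by norm_num⟩
    _ = (CFC.sqrt σ * CFC.sqrt ρ).trace.re := by
        rw [trace_mul_comm]
        norm_num [CFC.sqrt_eq_rpow]
    _ ≤ (CFC.abs (CFC.sqrt σ * CFC.sqrt ρ)).trace.re := re_trace_le_re_trace_abs _
    _ = fidelity ρ σ := (fidelity_eq_re_trace_abs hρ.1 hσ.1).symm
  exact ⟨hmain, fun t ht => hmain.trans ht⟩
end
end

section
/- Let ρ₀, ρ₁ be density operators on a Hilbert space H_E, and for a bit string m ∈ {0,1}^k let ρ_m := ρ_{m₁} ⊗ ··· ⊗ ρ_{m_k} and let m̄ denote the bitwise complement of m. Consider the classical-quantum states ρ̃ := (1/2)|0⟩⟨0| ⊗ ρ_m + (1/2)|1⟩⟨1| ⊗ ρ_{m̄} and ρ̄ := (1/2)|0⟩⟨0| ⊗ ρ₀^{⊗k} + (1/2)|1⟩⟨1| ⊗ ρ₁^{⊗k}. If there exists a unitary U on H_E with U ρ₀ U† = ρ₁ and U ρ₁ U† = ρ₀, then H(C|E)_{ρ̃} = H(C|E)_{ρ̄}, where H(C|E)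 denotes the conditional von Neumann entropy of the classical bit C given the quantum registers. -/
noncomputable section
open Matrix Filter
open scoped ComplexOrder Kronecker

variable {m : Type*} [Fintype m] [DecidableEq m]

/-! ### Auxiliary lemmas -/

/-- Conjugation by a unitary as a star algebra homomorphism. -/
def conjSAH (V : Matrix m m ℂ) (hV : V ∈ Matrix.unitaryGroup m ℂ) :
    Matrix m m ℂ →⋆ₐ[ℂ] Matrix m m ℂ where
  toFun x := V * x * Vᴴ
  map_one' := by
    simpa [Matrix.star_eq_conjTranspose] using hV.2
  map_mul' x y := by
    have h : Vᴴ * V = 1 := by simpa [Matrix.star_eq_conjTranspose] using hV.1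
    calc V * (x * y) * Vᴴ = V * x * (Vᴴ * V) * y * Vᴴ := by rw [h]; noncomm_ring
    _ = V * x * Vᴴ * (V * y * Vᴴ) := by noncomm_ring
  map_zero' := by simp
  map_add' x y := by noncomm_ring
  commutes' r := by
    have h : V * Vᴴ = 1 := by simpa [Matrix.star_eq_conjTranspose] using hV.2
    simp only [Algebra.algebraMap_eq_smul_one]
    rw [Matrix.mul_smul, Matrix.mul_one, Matrix.smul_mul, h]
  map_star' x := by
    simp [Matrix.star_eq_conjTranspose, Matrix.conjTranspose_mul, Matrix.mul_assoc]

lemma cfc_unitary_conj (V : Matrix m m ℂ) (hV : V ∈ Matrix.unitaryGroup m ℂ)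
    (f : ℝ → ℝ) (hf : Continuous f) (A : Matrix m m ℂ) (hA : IsSelfAdjoint A) :
    cfc f (V * A * Vᴴ) = V * cfc f A * Vᴴ := by
  have hφa : IsSelfAdjoint (V * A * Vᴴ) := by
    simpa [Matrix.star_eq_conjTranspose] using hA.conjugate V
  have := StarAlgHomClass.map_cfc (R := ℝ) (S := ℂ) (conjSAH V hV) f A
    (hf := hf.continuousOn)
    (hφ := by show Continuous fun x : Matrix m m ℂ => V * x * Vᴴ; fun_prop)
    (ha := hA) (hφa := hφa)
  exact this.symm

lemma trace_unitary_conj (V : Matrix m m ℂ) (hV : V ∈ Matrix.unitaryGroup m ℂ)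
    (X : Matrix m m ℂ) : (V * X * Vᴴ).trace = X.trace := by
  have h : Vᴴ * V = 1 := by simpa [Matrix.star_eq_conjTranspose] using hV.1
  rw [Matrix.trace_mul_cycle, h, Matrix.one_mul]

lemma vnEntropy_conj (V : Matrix m m ℂ) (hV : V ∈ Matrix.unitaryGroup m ℂ)
    (A : Matrix m m ℂ) (hA : IsSelfAdjoint A) :
    vnEntropy (V * A * Vᴴ) = vnEntropy A := by
  rw [vnEntropy, cfc_unitary_conj V hV _ Real.continuous_negMulLog A hA,
    trace_unitary_conj V hV, vnEntropy]

/-- Tensor product of a family of matrices. -/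
def tprodFam {n k : ℕ} (A : Fin k → Matrix (Fin n) (Fin n) ℂ) :
    Matrix (Fin k → Fin n) (Fin k → Fin n) ℂ := fun i j => ∏ t, A t (i t) (j t)

lemma tprodFam_mul {n k : ℕ} (A B : Fin k → Matrix (Fin n) (Fin n) ℂ) :
    tprodFam A * tprodFam B = tprodFam (fun t => A t * B t) := by
  ext i j
  simp only [Matrix.mul_apply, tprodFam, ← Finset.prod_mul_distrib]
  exact (Fintype.prod_sum fun t x => A t (i t) x * B t x (j t)).symm

lemma tprodFam_conjT {n k : ℕ} (A : Fin k → Matrix (Fin n) (Fin n) ℂ) :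
    (tprodFam A)ᴴ = tprodFam (fun t => (A t)ᴴ) := by
  ext i j
  simp [tprodFam, Matrix.conjTranspose_apply, map_prod]

lemma tprodFam_one {n k : ℕ} :
    tprodFam (fun _ : Fin k => (1 : Matrix (Fin n) (Fin n) ℂ)) = 1 := by
  ext i j
  by_cases h : i = j
  · subst h; simp [tprodFam, Matrix.one_apply]
  · obtain ⟨t, ht⟩ := Function.ne_iff.mp h
    rw [Matrix.one_apply_ne h]
    exact Finset.prod_eq_zero (Finset.mem_univ t) (Matrix.one_apply_ne ht)

lemma tprodFam_unitary {n k : ℕ} (A : Fin k → Matrix (Fin n) (Fin n) ℂ)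
    (hA : ∀ t, A t ∈ Matrix.unitaryGroup (Fin n) ℂ) :
    tprodFam A ∈ Matrix.unitaryGroup (Fin k → Fin n) ℂ := by
  rw [Matrix.mem_unitaryGroup_iff]
  rw [Matrix.star_eq_conjTranspose, tprodFam_conjT, tprodFam_mul]
  rw [show (fun t => A t * (A t)ᴴ) = fun _ : Fin k => (1 : Matrix (Fin n) (Fin n) ℂ) from
    funext fun t => by simpa [Matrix.star_eq_conjTranspose] using (hA t).2]
  exact tprodFam_one

lemma kron_conjT {α β : Type*} [Fintype α] [Fintype β]
    (A : Matrix α α ℂ) (B : Matrix β β ℂ) : (A ⊗ₖ B)ᴴ = Aᴴ ⊗ₖ Bᴴ := by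
  ext p q
  obtain ⟨i, j⟩ := p; obtain ⟨a, b⟩ := q
  simp [Matrix.conjTranspose_apply, Matrix.kroneckerMap_apply]

lemma kron_one_unitary {α β : Type*} [Fintype α] [Fintype β] [DecidableEq α] [DecidableEq β]
    (V : Matrix β β ℂ) (hV : V ∈ Matrix.unitaryGroup β ℂ) :
    (1 : Matrix α α ℂ) ⊗ₖ V ∈ Matrix.unitaryGroup (α × β) ℂ := by
  rw [Matrix.mem_unitaryGroup_iff, Matrix.star_eq_conjTranspose, kron_conjT,
    Matrix.conjTranspose_one, ← Matrix.mul_kronecker_mul, Matrix.mul_one,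
    show V * Vᴴ = 1 by simpa [Matrix.star_eq_conjTranspose] using hV.2,
    Matrix.one_kronecker_one]

section cq
variable {E : Type*} [Fintype E] [DecidableEq E]

lemma cqState_eq (a b : Matrix E E ℂ) :
    cqState a b = (Matrix.single (0 : Fin 2) 0 ((1:ℂ)/2)) ⊗ₖ a
      + (Matrix.single (1 : Fin 2) 1 ((1:ℂ)/2)) ⊗ₖ b := by
  ext p q
  obtain ⟨c, e⟩ := p; obtain ⟨c', e'⟩ := q
  fin_cases c <;> fin_cases c' <;>
    simp [cqState, Matrix.single, Matrix.kroneckerMap_apply, Matrix.add_apply]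

lemma conj_cqState (V : Matrix E E ℂ) (a b : Matrix E E ℂ) :
    ((1 : Matrix (Fin 2) (Fin 2) ℂ) ⊗ₖ V) * cqState a b * ((1 : Matrix (Fin 2) (Fin 2) ℂ) ⊗ₖ V)ᴴ
      = cqState (V * a * Vᴴ) (V * b * Vᴴ) := by
  rw [cqState_eq a b, cqState_eq, kron_conjT, Matrix.conjTranspose_one]
  rw [Matrix.mul_add, Matrix.add_mul, ← Matrix.mul_kronecker_mul, ← Matrix.mul_kronecker_mul,
    ← Matrix.mul_kronecker_mul, ← Matrix.mul_kronecker_mul, Matrix.one_mul, Matrix.one_mul,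
    Matrix.mul_one, Matrix.mul_one]

lemma ptraceFst_cqState (a b : Matrix E E ℂ) :
    ptraceFst (cqState a b) = (1/2 : ℂ) • (a + b) := by
  ext e e'
  simp [ptraceFst, cqState, Fin.sum_univ_two, Matrix.smul_apply, Matrix.add_apply]
  ring

lemma cqState_selfAdjoint (a b : Matrix E E ℂ)
    (ha : IsSelfAdjoint a) (hb : IsSelfAdjoint b) : IsSelfAdjoint (cqState a b) := by
  have ha' : aᴴ = a := ha
  have hb' : bᴴ = b := hb
  have h0 : (Matrix.single (0 : Fin 2) 0 ((1:ℂ)/2))ᴴ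
      = Matrix.single (0 : Fin 2) 0 ((1:ℂ)/2) := by
    ext i j
    simp [Matrix.conjTranspose_apply, Matrix.single, apply_ite, and_comm]
  have h1 : (Matrix.single (1 : Fin 2) 1 ((1:ℂ)/2))ᴴ
      = Matrix.single (1 : Fin 2) 1 ((1:ℂ)/2) := by
    ext i j
    simp [Matrix.conjTranspose_apply, Matrix.single, apply_ite, and_comm]
  rw [_root_.IsSelfAdjoint, Matrix.star_eq_conjTranspose, cqState_eq, Matrix.conjTranspose_add,
    kron_conjT, kron_conjT, ha', hb', h0, h1, ← cqState_eq]

end cq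

theorem condEnt_block_state_eq {n : ℕ} (ρ0 ρ1 : Matrix (Fin n) (Fin n) ℂ)
    (h0 : IsDensity ρ0) (h1 : IsDensity ρ1)
    (U : Matrix (Fin n) (Fin n) ℂ) (hU : U ∈ Matrix.unitaryGroup (Fin n) ℂ)
    (hU0 : U * ρ0 * Uᴴ = ρ1) (hU1 : U * ρ1 * Uᴴ = ρ0)
    (k : ℕ) (hk : 1 ≤ k) (msg : Fin k → Fin 2) :
    condEnt (cqState (tensSel ![ρ0, ρ1] msg)
        (tensSel ![ρ0, ρ1] (fun t => if msg t = 0 then 1 else 0)))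
      = condEnt (cqState (tpow ρ0 k) (tpow ρ1 k)) := by
  set ρs : Fin 2 → Matrix (Fin n) (Fin n) ℂ := ![ρ0, ρ1] with hρs
  set mbar : Fin k → Fin 2 := fun t => if msg t = 0 then 1 else 0 with hmbar
  set Us : Fin k → Matrix (Fin n) (Fin n) ℂ := fun t => if msg t = 0 then 1 else U with hUs
  set V : Matrix (Fin k → Fin n) (Fin k → Fin n) ℂ := tprodFam Us with hV
  have hVu : V ∈ Matrix.unitaryGroup (Fin k → Fin n) ℂ := by
    refine tprodFam_unitary Us fun t => ?_
    by_cases h : msg t = 0 <;> simp [hUs, h, hU, Submonoid.one_mem]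
  have hρ0 : ρ0ᴴ = ρ0 := h0.1.1
  have hρ1 : ρ1ᴴ = ρ1 := h1.1.1
  -- tensSel as tprodFam
  have htens : ∀ mm : Fin k → Fin 2, tensSel ρs mm = tprodFam (fun t => ρs (mm t)) :=
    fun _ => rfl
  have hsel : ∀ mm : Fin k → Fin 2, IsSelfAdjoint (tensSel ρs mm) := by
    intro mm
    rw [_root_.IsSelfAdjoint, Matrix.star_eq_conjTranspose, htens, tprodFam_conjT]
    have hfam : (fun t => (ρs (mm t))ᴴ) = fun t => ρs (mm t) := by
      funext t
      by_cases h : mm t = 0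
      · simp [hρs, h, hρ0]
      · have h' : mm t = 1 := by omega
        simp [hρs, h', hρ1]
    rw [hfam]
  have hA : V * tensSel ρs msg * Vᴴ = tpow ρ0 k := by
    rw [htens, hV, tprodFam_conjT, tprodFam_mul, tprodFam_mul]
    show _ = tprodFam (fun _ => ρ0)
    have hfam : (fun t => Us t * ρs (msg t) * (Us t)ᴴ) = fun _ : Fin k => ρ0 := by
      funext t
      by_cases h : msg t = 0
      · simp [hUs, hρs, h]
      · have h' : msg t = 1 := by omega
        simp [hUs, hρs, h, h', hU1]
    rw [hfam]
  have hB : V * tensSel ρs mbar * Vᴴ = tpow ρ1 k := by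
    rw [htens, hV, tprodFam_conjT, tprodFam_mul, tprodFam_mul]
    show _ = tprodFam (fun _ => ρ1)
    have hfam : (fun t => Us t * ρs (mbar t) * (Us t)ᴴ) = fun _ : Fin k => ρ1 := by
      funext t
      by_cases h : msg t = 0
      · simp [hUs, hρs, hmbar, h]
      · have h' : msg t = 1 := by omega
        simp [hUs, hρs, hmbar, h, h', hU0]
    rw [hfam]
  -- entropy of the joint state
  have e1 : vnEntropy (cqState (tensSel ρs msg) (tensSel ρs mbar))
      = vnEntropy (cqState (tpow ρ0 k) (tpow ρ1 k)) := by
    rw [← hA, ← hB, ← conj_cqState V,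
      vnEntropy_conj _ (kron_one_unitary V hVu) _
        (cqState_selfAdjoint _ _ (hsel msg) (hsel mbar))]
  -- entropy of the reduced state
  have e2 : vnEntropy ((1/2 : ℂ) • (tensSel ρs msg + tensSel ρs mbar))
      = vnEntropy ((1/2 : ℂ) • (tpow ρ0 k + tpow ρ1 k)) := by
    have hconj : V * ((1/2 : ℂ) • (tensSel ρs msg + tensSel ρs mbar)) * Vᴴ
        = (1/2 : ℂ) • (tpow ρ0 k + tpow ρ1 k) := by
      rw [← hA, ← hB, Matrix.mul_smul, Matrix.smul_mul, Matrix.mul_add, Matrix.add_mul]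
    have hsa : IsSelfAdjoint ((1/2 : ℂ) • (tensSel ρs msg + tensSel ρs mbar)) := by
      refine IsSelfAdjoint.smul ?_ ((hsel msg).add (hsel mbar))
      rw [_root_.IsSelfAdjoint]
      simp
    rw [← hconj, vnEntropy_conj V hVu _ hsa]
  rw [condEnt, condEnt, ptraceFst_cqState, ptraceFst_cqState, e1, e2]
end
end
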